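/- Let n be an even integer and ℓ an integer with n/2 < ℓ < n. Every zero-free sequence of length ℓ in Z/nZ contains a generator of Z/nZ with multiplicity at least 2ℓ − n + 1, and this bound is attained (e.g., by the image in Z/nZ of the integer sequence with 2ℓ−n+1 ones and n−ℓ−1 twos). -/

import Mathlib

/-!
Write `Σ₀(S)` for the set of subsums of a multiset `S`, the empty sum included. For a zero-sum
free `S` in a finite abelian group, induction on `|S|` shows that `|Σ₀(S)| ≥ 2|S|` unless `S` is
smooth: `S = (a₁g, …, a_k g)` with positive integers `aᵢ`, `∑ aᵢ < ord g`, and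
`Σ₀(S) = {0, g, …, (∑ aᵢ) g}`. Adding a term to a smooth sequence either keeps it smooth or doubles
its subsums, and if `S` has two distinct terms then removing a suitable one loses at least two
subsums.

In `ℤ/nℤ` with `2ℓ > n` the first alternative is impossible, so a zero-free sequence of length `ℓ`
is smooth. Then `ord g > ∑ aᵢ ≥ ℓ > n/2` makes `g` a generator, and `∑ aᵢ ≤ n - 1` forces at least
`2ℓ - n + 1` of the `aᵢ` to equal `1`. In the example the subsums are `1, …, n - 1`, and `2` is not
a generator because `n` is even.
-/

/-- A list in an additive commutative group is zero-free if no nonempty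
sublist sums to zero. -/
def ZeroFree {G : Type*} [AddCommGroup G] (l : List G) : Prop :=
  ∀ t : List G, t.Sublist l → t ≠ [] → t.sum ≠ 0

/-- The sumset of a list: all sums of nonempty sublists. -/
def sumset {G : Type*} [AddCommGroup G] (l : List G) : Set G :=
  {x | ∃ t : List G, t.Sublist l ∧ t ≠ [] ∧ t.sum = x}

open Finset

variable {G : Type*} [AddCommGroup G]

def ZeroSumFree (S : Multiset G) : Prop :=
  ∀ t ≤ S, t ≠ 0 → t.sum ≠ 0

namespace ZeroSumFree

variable {S T : Multiset G} {b : G}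

theorem mono (hT : ZeroSumFree T) (h : S ≤ T) : ZeroSumFree S :=
  fun t ht => hT t (ht.trans h)

theorem ne_zero_of_mem (hS : ZeroSumFree S) (hb : b ∈ S) : b ≠ 0 := fun h =>
  hS {b} (Multiset.singleton_le.2 hb) (Multiset.singleton_ne_zero b) (by simp [h])

theorem lt_addOrderOf_of_replicate [Finite G] {m : ℕ}
    (hS : ZeroSumFree (Multiset.replicate m b)) : m < addOrderOf b := by
  by_contra! h
  exact hS _ ((Multiset.replicate_le_replicate b).2 h)
    (Multiset.card_pos.1 (by simpa using addOrderOf_pos b)) (by simp [addOrderOf_nsmul_eq_zero])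

end ZeroSumFree

theorem ZeroFree.zeroSumFree_coe {l : List G} (h : ZeroFree l) :
    ZeroSumFree (l : Multiset G) := by
  rintro ⟨t⟩ ht hne
  obtain ⟨t', hperm, hsub⟩ := Multiset.coe_le.1 ht
  have ht' : t' ≠ [] := by rintro rfl; simp_all
  simpa [← hperm.sum_eq] using h t' hsub ht'

theorem Multiset.card_le_sum_of_zero_notMem {a : Multiset ℕ} (ha : 0 ∉ a) :
    Multiset.card a ≤ a.sum := by
  simpa using Multiset.card_nsmul_le_sum (a := 1) fun x hx =>
    Nat.one_le_iff_ne_zero.2 (ne_of_mem_of_not_mem hx ha)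

theorem Multiset.two_mul_card_le_sum_add_count_one {a : Multiset ℕ} (ha : 0 ∉ a) :
    2 * Multiset.card a ≤ a.sum + a.count 1 := by
  induction a using Multiset.induction_on with
  | empty => simp
  | cons x a ih =>
    rw [Multiset.mem_cons, not_or] at ha
    have := ih ha.2
    simp only [Multiset.card_cons, Multiset.sum_cons, Multiset.count_cons]
    split_ifs <;> omega

theorem Multiset.count_one_le_count_map_nsmul [DecidableEq G] (g : G) (a : Multiset ℕ) :
    a.count 1 ≤ (a.map (· • g)).count g :=
  Multiset.le_count_iff_replicate_le.2 <| by
    simpa using Multiset.map_le_map (f := (· • g : ℕ → G))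
      (Multiset.le_count_iff_replicate_le.1 (le_refl (a.count 1)))

section Subsums

variable [DecidableEq G]

def subsums (S : Multiset G) : Finset G :=
  (S.powerset.map Multiset.sum).toFinset

variable {S T : Multiset G} {b x : G}

theorem mem_subsums : x ∈ subsums S ↔ ∃ t ≤ S, t.sum = x := by
  simp [subsums]

theorem zero_mem_subsums (S : Multiset G) : 0 ∈ subsums S :=
  mem_subsums.2 ⟨0, Multiset.zero_le S, rfl⟩

theorem sum_mem_subsums (S : Multiset G) : S.sum ∈ subsums S :=
  mem_subsums.2 ⟨S, le_rfl, rfl⟩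

theorem subsums_mono (h : S ≤ T) : subsums S ⊆ subsums T := fun _ hx => by
  obtain ⟨t, ht, rfl⟩ := mem_subsums.1 hx
  exact mem_subsums.2 ⟨t, ht.trans h, rfl⟩

theorem subsums_cons (b : G) (T : Multiset G) :
    subsums (b ::ₘ T) = subsums T ∪ (subsums T).image (b + ·) := by
  ext x
  simp only [subsums, Multiset.powerset_cons, Multiset.map_add, Multiset.map_map,
    Multiset.toFinset_add, mem_union, mem_image, Multiset.mem_toFinset, Multiset.mem_map,
    Function.comp_apply, Multiset.sum_cons]
  constructor
  · rintro (h | ⟨t, ht, rfl⟩)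
    · exact Or.inl h
    · exact Or.inr ⟨t.sum, ⟨t, ht, rfl⟩, rfl⟩
  · rintro (h | ⟨_, ⟨t, ht, rfl⟩, rfl⟩)
    · exact Or.inl h
    · exact Or.inr ⟨t, ht, rfl⟩

theorem mem_subsums_of_mem (hb : b ∈ S) : b ∈ subsums S :=
  mem_subsums.2 ⟨{b}, Multiset.singleton_le.2 hb, Multiset.sum_singleton b⟩

theorem ZeroSumFree.neg_notMem_subsums (hS : ZeroSumFree (b ::ₘ T)) : -b ∉ subsums T := by
  intro h
  obtain ⟨t, ht, hsum⟩ := mem_subsums.1 h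
  exact hS (b ::ₘ t) (Multiset.cons_le_cons b ht) Multiset.cons_ne_zero (by simp [hsum])

theorem ZeroSumFree.sum_notMem_subsums (hS : ZeroSumFree (b ::ₘ T)) :
    (b ::ₘ T).sum ∉ subsums T := by
  intro h
  obtain ⟨t, ht, hsum⟩ := mem_subsums.1 h
  have hT : T = T - t + t := (tsub_add_cancel_of_le ht).symm
  refine hS (b ::ₘ (T - t)) (Multiset.cons_le_cons b tsub_le_self) Multiset.cons_ne_zero ?_
  rw [hT, Multiset.sum_cons, Multiset.sum_add, ← add_assoc] at hsum
  simpa using hsum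

def IsSmooth (S : Multiset G) : Prop :=
  ∃ (g : G) (a : Multiset ℕ), S = a.map (· • g) ∧ 0 ∉ a ∧ a.sum < addOrderOf g ∧
    subsums S = (range (a.sum + 1)).image (· • g)

theorem image_add_nsmul_image_range (g : G) (u s : ℕ) :
    ((range s).image (· • g)).image (u • g + ·) = (Ico u (u + s)).image (· • g) := by
  rw [image_image, range_eq_Ico,
    show Ico u (u + s) = (Ico 0 s).image (u + ·) by rw [image_add_left_Ico, add_zero], image_image]
  simp only [Function.comp_def, add_nsmul]

theorem subsums_cons_nsmul {g : G} {u s : ℕ}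
    (hT : subsums T = (range (s + 1)).image (· • g)) (hu : u ≤ s + 1) :
    subsums (u • g ::ₘ T) = (range (u + s + 1)).image (· • g) := by
  rw [subsums_cons, hT, image_add_nsmul_image_range, ← image_union]
  congr 1
  ext j
  simp only [mem_union, mem_range, mem_Ico]
  omega

theorem subsums_replicate (m : ℕ) (b : G) :
    subsums (Multiset.replicate m b) = (range (m + 1)).image (· • b) := by
  induction m with
  | zero => ext; simp [subsums]
  | succ m ih =>
    have h := subsums_cons_nsmul (u := 1) ih le_add_self
    rwa [one_nsmul, add_comm 1 m] at h

theorem ZeroSumFree.isSmooth_replicate [Finite G] {m : ℕ}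
    (hS : ZeroSumFree (Multiset.replicate m b)) : IsSmooth (Multiset.replicate m b) :=
  ⟨b, Multiset.replicate m 1, by simp, by simp [Multiset.mem_replicate],
    by simpa using hS.lt_addOrderOf_of_replicate, by simpa using subsums_replicate m b⟩

/- If `b = u • g`, zero-sum freeness forces `u + ∑ aᵢ < ord g`, and `Σ₀(b :: T)` is the image of
`[0, ∑ aᵢ] ∪ [u, u + ∑ aᵢ]` under `(· • g)`. Otherwise `Σ₀(T)` and `b + Σ₀(T)` are disjoint. -/
theorem ZeroSumFree.two_mul_card_le_card_subsums_or_isSmooth_cons [Finite G]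
    (hS : ZeroSumFree (b ::ₘ T)) (hT : IsSmooth T) :
    2 * Multiset.card (b ::ₘ T) ≤ #(subsums (b ::ₘ T)) ∨ IsSmooth (b ::ₘ T) := by
  obtain ⟨g, a, rfl, ha, hlt, hsub⟩ := hT
  have hcard : Multiset.card a ≤ a.sum := Multiset.card_le_sum_of_zero_notMem ha
  have hinj : Set.InjOn (· • g) (range (addOrderOf g) : Set ℕ) := by
    simpa [Set.InjOn] using nsmul_injOn_Iio_addOrderOf (x := g)
  have hB : #(subsums (a.map (· • g))) = a.sum + 1 := by
    rw [hsub, card_image_of_injOn (hinj.mono ?_), card_range]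
    intro j hj
    simp only [coe_range, Set.mem_Iio] at hj ⊢
    omega
  simp only [Multiset.card_cons, Multiset.card_map]
  by_cases hb : b ∈ AddSubgroup.zmultiples g
  · obtain ⟨u, hu, rfl⟩ := mem_image.1 (mem_zmultiples_iff_mem_range_addOrderOf.1 hb)
    rw [mem_range] at hu
    have hu0 : u ≠ 0 := by
      rintro rfl
      exact hS.ne_zero_of_mem (Multiset.mem_cons_self _ _) (zero_nsmul g)
    have hus : u + a.sum < addOrderOf g := by
      by_contra! h
      refine hS.neg_notMem_subsums (hsub ▸ mem_image.2 ⟨addOrderOf g - u, ?_, ?_⟩)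
      · rw [mem_range]
        omega
      · rw [eq_neg_iff_add_eq_zero, ← add_nsmul, Nat.sub_add_cancel hu.le,
          addOrderOf_nsmul_eq_zero]
    rcases le_or_gt u (a.sum + 1) with hle | hgt
    · refine Or.inr ⟨g, u ::ₘ a, by simp, by simp [ha, Ne.symm hu0],
        by simpa [add_comm] using hus,
        by simpa [add_comm, add_assoc] using subsums_cons_nsmul hsub hle⟩
    · left
      rw [subsums_cons, hsub, image_add_nsmul_image_range, ← image_union,
        card_image_of_injOn (hinj.mono ?_), card_union_of_disjoint (disjoint_left.2 ?_)]
      · simp only [card_range, Nat.card_Ico]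
        omega
      · intro j hj
        simp only [mem_range, mem_Ico] at hj ⊢
        omega
      · intro j hj
        simp only [coe_union, coe_range, coe_Ico, Set.mem_union, Set.mem_Iio, Set.mem_Ico] at hj ⊢
        omega
  · left
    rw [subsums_cons, card_union_of_disjoint, card_image_of_injective _ (add_right_injective b),
      hB]
    · omega
    · have hzm : ∀ z ∈ subsums (a.map (· • g)), z ∈ AddSubgroup.zmultiples g := by
        intro z hz
        rw [hsub] at hz
        obtain ⟨j, -, rfl⟩ := mem_image.1 hz
        exact AddSubgroup.nsmul_mem_zmultiples g j
      rw [disjoint_left]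
      rintro _ hx hbx
      obtain ⟨y, hy, rfl⟩ := mem_image.1 hbx
      exact hb (by simpa using sub_mem (hzm _ hx) (hzm _ hy))

/- If removing any term `v` loses only the total sum `σ`, then `Σ₀(S - v) = Σ₀(S) \ {σ} =: B` and
`v + B = Σ₀(S) \ {0}` for every term `v`. For distinct terms `b, c` this gives
`-b + c ∈ B`, then `-b ∈ B = Σ₀(S - b)`, which is impossible. -/
theorem ZeroSumFree.exists_card_subsums_erase_add_two_le (hS : ZeroSumFree S) {c : G}
    (hb : b ∈ S) (hc : c ∈ S) (hbc : b ≠ c) :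
    ∃ v ∈ S, #(subsums (S.erase v)) + 2 ≤ #(subsums S) := by
  by_contra! hsmall
  have hcons : ∀ v ∈ S, ZeroSumFree (v ::ₘ S.erase v) := fun v hv => by
    rwa [Multiset.cons_erase hv]
  have hremove : ∀ v ∈ S, subsums (S.erase v) = (subsums S).erase S.sum ∧
      ((subsums S).erase S.sum).image (v + ·) = (subsums S).erase 0 := by
    intro v hv
    have hσ := (hcons v hv).sum_notMem_subsums
    rw [Multiset.cons_erase hv] at hσ
    have hB : subsums (S.erase v) = (subsums S).erase S.sum := by
      refine eq_of_subset_of_card_le (fun x hx => mem_erase.2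
        ⟨ne_of_mem_of_not_mem hx hσ, subsums_mono (Multiset.erase_le v S) hx⟩) ?_
      rw [card_erase_of_mem (sum_mem_subsums S)]
      have := hsmall v hv
      omega
    refine ⟨hB, eq_of_subset_of_card_le ?_ ?_⟩
    · rw [← hB]
      rintro _ hx
      obtain ⟨y, hy, rfl⟩ := mem_image.1 hx
      refine mem_erase.2 ⟨fun h => (hcons v hv).neg_notMem_subsums ?_, ?_⟩
      · rwa [neg_eq_of_add_eq_zero_right h]
      · rw [← Multiset.cons_erase hv, subsums_cons]
        exact mem_union_right _ (mem_image_of_mem _ hy)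
    · rw [card_image_of_injective _ (add_right_injective v),
        card_erase_of_mem (zero_mem_subsums S), card_erase_of_mem (sum_mem_subsums S)]
  obtain ⟨hBb, hTb⟩ := hremove b hb
  obtain ⟨-, hTc⟩ := hremove c hc
  have hcb : c ∈ (subsums S).erase 0 :=
    mem_erase.2 ⟨hS.ne_zero_of_mem hc, mem_subsums_of_mem hc⟩
  rw [← hTb, image_add_left, mem_preimage] at hcb
  have hb' : -b + c ∈ (subsums S).erase 0 :=
    mem_erase.2 ⟨fun h => hbc (neg_add_eq_zero.1 h), mem_of_mem_erase hcb⟩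
  rw [← hTc, image_add_left, mem_preimage, ← hBb, show -c + (-b + c) = -b by abel] at hb'
  exact (hcons b hb).neg_notMem_subsums hb'

theorem ZeroSumFree.two_mul_card_le_card_subsums_or_isSmooth [Finite G] (hS : ZeroSumFree S) :
    2 * Multiset.card S ≤ #(subsums S) ∨ IsSmooth S := by
  induction S using Multiset.strongInductionOn with
  | ih S ih =>
  by_cases hdistinct : ∃ b ∈ S, ∃ c ∈ S, b ≠ c
  · obtain ⟨b, hb, c, hc, hbc⟩ := hdistinct
    obtain ⟨v, hv, hgrow⟩ := hS.exists_card_subsums_erase_add_two_le hb hc hbc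
    rcases ih _ (Multiset.erase_lt.2 hv) (hS.mono (Multiset.erase_le v S)) with hbig | hsmooth
    · have := Multiset.card_erase_add_one hv
      omega
    · rw [← Multiset.cons_erase hv] at hS ⊢
      exact hS.two_mul_card_le_card_subsums_or_isSmooth_cons hsmooth
  · push Not at hdistinct
    obtain ⟨b, hSb⟩ : ∃ b, ∀ x ∈ S, x = b := by
      rcases S.empty_or_exists_mem with rfl | ⟨b, hb⟩
      · exact ⟨0, by simp⟩
      · exact ⟨b, fun x hx => hdistinct x hx b hb⟩
    rw [Multiset.eq_replicate_card.2 hSb] at hS ⊢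
    exact Or.inr hS.isSmooth_replicate

end Subsums

theorem ZeroFree.exists_addOrderOf_eq_le_count {n : ℕ} [NeZero n] {α : List (ZMod n)}
    (hα : ZeroFree α) (hn : n < 2 * α.length) :
    ∃ a ∈ α, addOrderOf a = n ∧ 2 * α.length - n + 1 ≤ α.count a := by
  rcases hα.zeroSumFree_coe.two_mul_card_le_card_subsums_or_isSmooth with hbig | hsmooth
  · have := card_le_univ (subsums (α : Multiset (ZMod n)))
    simp only [Multiset.coe_card, ZMod.card] at hbig this
    omega
  obtain ⟨g, a, hαa, ha, hlt, -⟩ := hsmooth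
  have hlen : α.length = Multiset.card a := by rw [← Multiset.coe_card, hαa, Multiset.card_map]
  have hcard := Multiset.card_le_sum_of_zero_notMem ha
  have hord : n = addOrderOf g :=
    Nat.eq_of_dvd_of_lt_two_mul (NeZero.ne n) (by simpa using addOrderOf_dvd_card (x := g))
      (by omega)
  have hcount : a.count 1 ≤ α.count g := by
    rw [← Multiset.coe_count, hαa]
    exact Multiset.count_one_le_count_map_nsmul g a
  have := Multiset.two_mul_card_le_sum_add_count_one ha
  exact ⟨g, List.count_pos_iff.1 (by omega), hord.symm, by omega⟩

theorem zeroFree_replicate_one_append_replicate_two {n i j : ℕ} (h : i + 2 * j < n) :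
    ZeroFree (List.replicate i (1 : ZMod n) ++ List.replicate j 2) := by
  intro t ht hne
  obtain ⟨t₁, t₂, rfl, h₁, h₂⟩ := List.sublist_append_iff.1 ht
  obtain ⟨i', hi, rfl⟩ := List.sublist_replicate_iff.1 h₁
  obtain ⟨j', hj, rfl⟩ := List.sublist_replicate_iff.1 h₂
  have hpos : 0 < i' + 2 * j' := by
    simp only [ne_eq, List.append_eq_nil_iff, List.replicate_eq_nil_iff, not_and] at hne
    omega
  have hsum : (List.replicate i' (1 : ZMod n) ++ List.replicate j' 2).sum =
      ((i' + 2 * j' : ℕ) : ZMod n) := by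
    simp only [List.sum_append, List.sum_replicate, nsmul_eq_mul, mul_one]
    push_cast
    ring
  rw [hsum, Ne, ZMod.natCast_eq_zero_iff]
  exact Nat.not_dvd_of_pos_of_lt hpos (by omega)

theorem ZMod.addOrderOf_two_ne {n : ℕ} (heven : Even n) (hn : n ≠ 0) :
    addOrderOf (2 : ZMod n) ≠ n := by
  have h := ZMod.addOrderOf_coe 2 hn
  rw [Nat.cast_ofNat, Nat.gcd_eq_right (even_iff_two_dvd.1 heven)] at h
  omega

theorem count_replicate_one_append_replicate_two_le {n i j : ℕ} (heven : Even n) (hn : n ≠ 0)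
    {a : ZMod n} (ha : addOrderOf a = n) :
    (List.replicate i (1 : ZMod n) ++ List.replicate j 2).count a ≤ i := by
  have h2 : (2 : ZMod n) ≠ a := by
    rintro rfl
    exact ZMod.addOrderOf_two_ne heven hn ha
  simp only [List.count_append, List.count_replicate, beq_iff_eq, h2, if_false]
  split_ifs <;> omega

theorem stmt16 (n ℓ : ℕ) (heven : Even n) (h1 : n < 2 * ℓ) (h2 : ℓ < n) :
    (∀ α : List (ZMod n), α.length = ℓ → ZeroFree α →
      ∃ a ∈ α, addOrderOf a = n ∧ 2 * ℓ - n + 1 ≤ α.count a) ∧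
    (∀ β : List (ZMod n),
      β = List.replicate (2 * ℓ - n + 1) (1 : ZMod n) ++
          List.replicate (n - ℓ - 1) (2 : ZMod n) →
      ZeroFree β ∧ β.length = ℓ ∧
        ∀ a : ZMod n, addOrderOf a = n → β.count a ≤ 2 * ℓ - n + 1) := by
  have hn : n ≠ 0 := by omega
  have : NeZero n := ⟨hn⟩
  refine ⟨fun α hlen hα => ?_, fun β hβ => ?_⟩
  · subst hlen
    exact hα.exists_addOrderOf_eq_le_count h1
  · subst hβ
    refine ⟨zeroFree_replicate_one_append_replicate_two (by omega), ?_,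
      fun a ha => count_replicate_one_append_replicate_two_le heven hn ha⟩
    simp only [List.length_append, List.length_replicate]
    omega
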